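/- Let G be a connected finite simple graph. If the matching polynomial μ(G,x) has exactly 3 distinct real roots, then G is isomorphic either to a star K_{1,m} for some m ≥ 2, or to the triangle K₃. -/

import Mathlib

open Polynomial

/-- The graph obtained from `G` by deleting the vertex `u` and all incident edges. -/
def SimpleGraph.deleteVertex {V : Type*} (G : SimpleGraph V) (u : V) :
    SimpleGraph {v : V // v ≠ u} where
  Adj a b := G.Adj a b
  symm := ⟨fun _ _ h => G.symm.symm _ _ h⟩
  loopless := ⟨fun a h => G.loopless.irrefl a h⟩

/-- `s` is a matching in `G`: a set of edges of `G` that are pairwise non-incident. -/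
def SimpleGraph.IsMatchingFinset {V : Type*} (G : SimpleGraph V) (s : Finset (Sym2 V)) : Prop :=
  ↑s ⊆ G.edgeSet ∧ (s : Set (Sym2 V)).Pairwise fun e f => ∀ v ∈ e, v ∉ f

/-- `m(G,k)`: the number of `k`-matchings in `G`. -/
noncomputable def SimpleGraph.numMatchings {V : Type*} (G : SimpleGraph V) (k : ℕ) : ℕ :=
  {s : Finset (Sym2 V) | s.card = k ∧ G.IsMatchingFinset s}.ncard

/-- The matching polynomial `μ(G,x) = ∑_k (-1)^k m(G,k) x^(n-2k)`. -/
noncomputable def SimpleGraph.matchingPolynomial {V : Type*} [Fintype V] (G : SimpleGraph V) :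
    Polynomial ℝ :=
  ∑ k ∈ Finset.range (Fintype.card V + 1),
    C ((-1 : ℝ) ^ k * (G.numMatchings k : ℝ)) * X ^ (Fintype.card V - 2 * k)

/-- The star `K_{1,m}` with centre `none` and `m` leaves. -/
def starGraph (m : ℕ) : SimpleGraph (Option (Fin m)) :=
  SimpleGraph.fromRel fun x _ => x = none

/-!
Write `μ(S)` for the matching polynomial of the subgraph induced on a vertex set `S`. Sorting the
matchings by the edge covering a vertex `u` gives `μ(S) = x μ(S - u) - ∑_{v ∼ u} μ(S - u - v)`;
moreover `μ` is multiplicative over vertex sets with no edges between them,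
`μ(S)' = ∑_u μ(S - u)`, and `μ(S)(-x) = ± μ(S)(x)`.

By induction along the recursion, `μ(S)(z) · conj μ(S - u)(z)` has positive imaginary part when
`Im z > 0`, so `μ` is real-rooted (Heilmann–Lieb). Likewise every root of `μ(S - u)` lies below a
root of `μ(S)`, strictly if `S` is connected: the largest root `s` of `μ(S - u)` is a root of
`μ(T)` for a component `T` of `S - u`, and for a neighbour `v ∈ T` of `u` it vanishes to lower
order in `μ(S - u - v)` than in `μ(S - u)`, which makes `μ(S)` negative just above `s`. With the
derivative formula, the largest root `θ` of a connected graph is simple.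

So if `μ(G)` has exactly three distinct roots, they are `-θ, 0, θ` with `±θ` simple, hence
`μ(G) = x^(n-2) (x^2 - θ^2)`, the coefficient `m(G, 2)` of `x^(n-4)` vanishes, and any two edges
of `G` meet. A connected graph on at least three vertices whose edges pairwise meet is a star or a
triangle.
-/

open Finset ComplexConjugate

lemma Complex.im_mul_conj_eq_neg (a b : ℂ) : (b * conj a).im = -(a * conj b).im := by
  simp only [Complex.mul_im, Complex.conj_re, Complex.conj_im]
  ring

namespace Polynomial

variable {p : ℝ[X]} {x : ℝ}

lemma card_roots_eq_natDegree_of_aeval_ne_zero (h : ∀ z : ℂ, z.im ≠ 0 → aeval z p ≠ 0) :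
    Multiset.card p.roots = p.natDegree := by
  classical
  have hinj : Function.Injective (algebraMap ℝ ℂ) := (algebraMap ℝ ℂ).injective
  have hle : (p.map (algebraMap ℝ ℂ)).roots ≤ p.roots.map (algebraMap ℝ ℂ) := by
    refine Multiset.le_iff_count.2 fun z => ?_
    rw [count_roots]
    by_cases hz : z.im = 0
    · obtain ⟨r, rfl⟩ : ∃ r : ℝ, (r : ℂ) = z :=
        ⟨z.re, Complex.ext (by simp) (by simp [hz])⟩
      rw [← Complex.coe_algebraMap, ← eq_rootMultiplicity_map hinj,
        Multiset.count_map_eq_count' _ _ hinj, count_roots]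
    · rw [rootMultiplicity_eq_zero fun hroot => h z hz (by rwa [aeval_def, ← eval_map])]
      exact Nat.zero_le _
  refine le_antisymm (card_roots' p) ?_
  calc p.natDegree = Multiset.card (p.map (algebraMap ℝ ℂ)).roots :=
        (IsAlgClosed.card_roots_map_eq_natDegree_of_injective p hinj).symm
    _ ≤ Multiset.card p.roots := by simpa using Multiset.card_le_card hle

lemma exists_isRoot_ge_of_eval_nonpos (hp : p.Monic) (h : p.eval x ≤ 0) :
    ∃ r, x ≤ r ∧ p.IsRoot r := by
  by_contra! hroots
  exact h.not_gt <| zero_lt_eval_of_roots_lt_of_leadingCoeff_nonneg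
    (fun y hy => lt_of_not_ge fun hxy => hroots y hxy hy) (by simp [hp.leadingCoeff])

lemma exists_isRoot_gt_of_eval_neg (hp : p.Monic) (h : p.eval x < 0) :
    ∃ r, x < r ∧ p.IsRoot r := by
  by_contra! hroots
  exact h.not_ge <| zero_le_eval_of_roots_le_of_leadingCoeff_nonneg
    (fun y hy => le_of_not_gt fun hxy => hroots y hxy hy) (by simp [hp.leadingCoeff])

lemma exists_isGreatest_isRoot (hp : p ≠ 0) (hx : p.IsRoot x) :
    ∃ s, x ≤ s ∧ IsGreatest {y | p.IsRoot y} s := by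
  classical
  obtain ⟨s, hs, hmax⟩ := p.roots.toFinset.exists_max_image id ⟨x, by simpa [hp] using hx⟩
  simp only [Multiset.mem_toFinset, mem_roots hp, id] at hs hmax
  exact ⟨s, hmax x hx, hs, fun y hy => hmax y hy⟩

lemma eval_divByMonic_pow_rootMultiplicity_pos (hp : p.Monic) (h : ∀ y, p.IsRoot y → y ≤ x) :
    0 < (p /ₘ (X - C x) ^ p.rootMultiplicity x).eval x := by
  have hfac := pow_mul_divByMonic_rootMultiplicity_eq p x
  have hq := ((monic_X_sub_C x).pow _).of_mul_monic_left (hfac.symm ▸ hp)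
  refine zero_lt_eval_of_roots_lt_of_leadingCoeff_nonneg (fun y hy => ?_)
    (by simp [hq.leadingCoeff])
  refine lt_of_le_of_ne (h y ?_) ?_
  · rw [← hfac, IsRoot, eval_mul, hy, mul_zero]
  · rintro rfl
    exact eval_divByMonic_pow_rootMultiplicity_ne_zero y hp.ne_zero hy

lemma exists_isRoot_gt_of_eq_X_mul_sub_sum {ι : Type*} {I : Finset ι} {a : ℝ[X]}
    {b : ι → ℝ[X]} {s : ℝ} (hp : p.Monic) (hpab : p = X * a - ∑ i ∈ I, b i)
    (hb : ∀ i ∈ I, (b i).Monic)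
    (hbroots : ∀ i ∈ I, ∀ y, (b i).IsRoot y → y ≤ s)
    (hlt : ∃ i ∈ I, (b i).rootMultiplicity s < a.rootMultiplicity s) :
    ∃ r, s < r ∧ p.IsRoot r := by
  obtain ⟨i₁, hi₁, hlt₁⟩ := hlt
  obtain ⟨i₀, hi₀, hmin⟩ :=
    I.exists_min_image (fun i => (b i).rootMultiplicity s) ⟨i₁, hi₁⟩
  set m := fun q : ℝ[X] => q.rootMultiplicity s
  set k := m (b i₀)
  have hk : k < m a := (hmin i₁ hi₁).trans_lt hlt₁
  -- with `k` the least order of vanishing of the `bᵢ` at `s`, `p = (X - s)^k * η` where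
  -- `η(s) = -∑ (bᵢ / (X - s)^k)(s) < 0`
  set B := fun i => (X - C s) ^ (m (b i) - k) * (b i /ₘ (X - C s) ^ m (b i))
  set η := X * ((X - C s) ^ (m a - k) * (a /ₘ (X - C s) ^ m a)) - ∑ i ∈ I, B i
  have hsplit (q : ℝ[X]) (hq : k ≤ m q) :
      (X - C s) ^ k * ((X - C s) ^ (m q - k) * (q /ₘ (X - C s) ^ m q)) = q := by
    rw [← mul_assoc, ← pow_add, Nat.add_sub_cancel' hq, pow_mul_divByMonic_rootMultiplicity_eq]
  have hpη : p = (X - C s) ^ k * η := by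
    rw [mul_sub, mul_sum, hpab, mul_left_comm, hsplit a hk.le]
    exact congrArg _ (sum_congr rfl fun i hi => (hsplit (b i) (hmin i hi)).symm)
  have hBnonneg (i) (hi : i ∈ I) : 0 ≤ (B i).eval s := by
    have := eval_divByMonic_pow_rootMultiplicity_pos (hb i hi) (hbroots i hi)
    simp only [B, eval_mul, eval_pow, eval_sub, eval_X, eval_C, sub_self]
    positivity
  have hBpos : 0 < (B i₀).eval s := by
    simpa [B, k] using eval_divByMonic_pow_rootMultiplicity_pos (hb i₀ hi₀) (hbroots i₀ hi₀)
  have hη : η.eval s < 0 := by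
    have hsum : (B i₀).eval s ≤ ∑ i ∈ I, (B i).eval s := single_le_sum hBnonneg hi₀
    have hzero : ((X - C s) ^ (m a - k)).eval s = 0 := by
      simp [Nat.sub_ne_zero_of_lt hk]
    simp only [η, eval_sub, eval_mul, eval_X, eval_finsetSum, hzero]
    linarith
  obtain ⟨r, hsr, hr⟩ := exists_isRoot_gt_of_eval_neg
    (((monic_X_sub_C s).pow k).of_mul_monic_left (hpη ▸ hp)) hη
  exact ⟨r, hsr, by rw [hpη, IsRoot, eval_mul, hr, mul_zero]⟩

lemma pos_and_forall_mem_roots_of_card_roots_toFinset_eq_three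
    (hsymm : p.roots.map Neg.neg = p.roots)
    (h3 : p.roots.toFinset.card = 3) {θ : ℝ} (hθ : IsGreatest {x | p.IsRoot x} θ) :
    0 < θ ∧ ∀ x ∈ p.roots, x = θ ∨ x = -θ ∨ x = 0 := by
  classical
  have hp : p ≠ 0 := fun h => by simp [h] at h3
  have hneg {x} (hx : x ∈ p.roots) : -x ∈ p.roots := hsymm ▸ Multiset.mem_map_of_mem _ hx
  have hle {x} (hx : x ∈ p.roots) : x ≤ θ := hθ.2 ((mem_roots hp).1 hx)
  have hθmem : θ ∈ p.roots := (mem_roots hp).2 hθ.1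
  have hθpos : 0 < θ := by
    by_contra! hθ0
    have : p.roots.toFinset ⊆ {0} := fun x hx => by
      have hx := Multiset.mem_toFinset.1 hx
      have := hle (hneg hx)
      simpa using le_antisymm ((hle hx).trans hθ0) (by linarith)
    simpa [h3] using card_le_card this
  refine ⟨hθpos, fun x hx => ?_⟩
  by_contra! hx'
  obtain ⟨hxθ, hxθ', hx0⟩ := hx'
  have hF : ({θ, -θ, x} : Finset ℝ) = p.roots.toFinset := by
    refine eq_of_subset_of_card_le (fun y hy => ?_) ?_
    · simp only [mem_insert, mem_singleton] at hy
      rcases hy with rfl | rfl | rfl <;> simp [hθmem, hneg hθmem, hx]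
    · rw [h3, card_insert_of_notMem (by simp [hxθ.symm]; linarith),
        card_insert_of_notMem (by simpa using (Ne.symm hxθ'))]
      rfl
  have := hF ▸ Multiset.mem_toFinset.2 (hneg hx)
  simp only [mem_insert, mem_singleton] at this
  rcases this with h | h | h
  · exact hxθ' (by linarith)
  · exact hxθ (by linarith)
  · exact hx0 (by linarith)

theorem eq_X_pow_mul_of_card_roots_toFinset_eq_three (hp : p.Monic)
    (hcard : Multiset.card p.roots = p.natDegree) (hsymm : p.roots.map Neg.neg = p.roots)
    (h3 : p.roots.toFinset.card = 3) {θ : ℝ} (hθ : IsGreatest {x | p.IsRoot x} θ)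
    (hθ1 : p.rootMultiplicity θ = 1) :
    p = X ^ (p.natDegree - 2) * (X ^ 2 - C (θ ^ 2)) := by
  classical
  obtain ⟨hθpos, hcases⟩ := pos_and_forall_mem_roots_of_card_roots_toFinset_eq_three hsymm h3 hθ
  have hθθ : -θ ≠ θ := by linarith
  have hcountθ : p.roots.count θ = 1 := by rw [count_roots, hθ1]
  have hcountθ' : p.roots.count (-θ) = 1 := by
    have := Multiset.count_map_eq_count' Neg.neg p.roots neg_injective θ
    rwa [hsymm, hcountθ] at this
  have hmemθ : θ ∈ p.roots := Multiset.count_pos.1 (by omega)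
  have hmemθ' : -θ ∈ p.roots.erase θ :=
    (Multiset.mem_erase_of_ne hθθ).2 (Multiset.count_pos.1 (by omega))
  set M := (p.roots.erase θ).erase (-θ)
  have hM : M = Multiset.replicate (p.natDegree - 2) 0 := by
    refine Multiset.eq_replicate.2 ⟨?_, fun x hx => ?_⟩
    · rw [Multiset.card_erase_of_mem hmemθ', Multiset.card_erase_of_mem hmemθ, hcard,
        Nat.pred_eq_sub_one, Nat.pred_eq_sub_one, Nat.sub_sub]
    · have hcount : M.count θ = 0 ∧ M.count (-θ) = 0 := by
        simp only [M, Multiset.count_erase_of_ne hθθ.symm, Multiset.count_erase_self,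
          Multiset.count_erase_of_ne hθθ, hcountθ, hcountθ', tsub_self, and_self]
      rcases hcases x (Multiset.mem_of_mem_erase (Multiset.mem_of_mem_erase hx)) with
        rfl | rfl | rfl
      · simp [Multiset.count_eq_zero.1 hcount.1] at hx
      · simp [Multiset.count_eq_zero.1 hcount.2] at hx
      · rfl
  have hroots : p.roots = θ ::ₘ -θ ::ₘ M := by
    rw [Multiset.cons_erase hmemθ', Multiset.cons_erase hmemθ]
  conv_lhs => rw [← prod_multiset_X_sub_C_of_monic_of_roots_card_eq hp hcard, hroots, hM]
  simp only [Multiset.map_cons, Multiset.prod_cons, Multiset.map_replicate, Multiset.prod_replicate,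
    map_neg, map_pow, C_0, sub_zero]
  ring

end Polynomial

namespace SimpleGraph

variable {V : Type*} {G : SimpleGraph V} {s t : Finset (Sym2 V)} {S T W : Finset V} {u v : V}
  {r θ : ℝ}

lemma nonempty_starGraph_iso [Fintype V] (c : V) :
    Nonempty (SimpleGraph.starGraph c ≃g _root_.starGraph (Fintype.card V - 1)) := by
  classical
  have hcard : Fintype.card {b // b ≠ c} = Fintype.card V - 1 := by
    have := Fintype.card_congr (Equiv.optionSubtypeNe c)
    rw [Fintype.card_option] at this
    omega
  let φ : V ≃ Option (Fin (Fintype.card V - 1)) :=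
    (Equiv.optionSubtypeNe c).symm.trans (Equiv.optionCongr (Fintype.equivFinOfCardEq hcard))
  have hφ (v : V) : φ v = none ↔ v = c := by
    by_cases hv : v = c <;> simp [φ, hv]
  refine ⟨{ toEquiv := φ, map_rel_iff' := fun {a b} => ?_ }⟩
  simp [_root_.starGraph, hφ]

lemma Connected.eq_starGraph [Nontrivial V] (hG : G.Connected) {c : V}
    (hc : ∀ ⦃a b⦄, G.Adj a b → a = c ∨ b = c) :
    G = SimpleGraph.starGraph c := by
  ext a b
  rw [starGraph_adj]
  refine ⟨fun hab => ⟨hab.ne, hc hab⟩, fun ⟨hab, h⟩ => ?_⟩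
  have hadj (v) (hv : v ≠ c) : G.Adj c v := by
    obtain ⟨w, hvw⟩ := hG.preconnected.exists_adj_of_nontrivial v
    obtain rfl | rfl := hc hvw
    · exact absurd rfl hv
    · exact hvw.symm
  rcases h with rfl | rfl
  exacts [hadj b hab.symm, (hadj a hab).symm]

lemma Connected.eq_or_eq_or_eq_of_adj_of_adj_of_adj [Nontrivial V] (hG : G.Connected)
    (hmeet : ∀ ⦃a b c d⦄, G.Adj a b → G.Adj c d → a = c ∨ a = d ∨ b = c ∨ b = d)
    {a b c : V} (hab : G.Adj a b) (hbc : G.Adj b c) (hac : G.Adj a c) (d : V) :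
    d = a ∨ d = b ∨ d = c := by
  by_contra! hd
  obtain ⟨w, hdw⟩ := hG.preconnected.exists_adj_of_nontrivial d
  have := hmeet hdw hab
  have := hmeet hdw hbc
  have := hmeet hdw hac
  grind [G.ne_of_adj hab, G.ne_of_adj hbc, G.ne_of_adj hac]

lemma Connected.nonempty_iso_top_of_adj_of_adj_of_adj [Fintype V] [Nontrivial V]
    (hG : G.Connected)
    (hmeet : ∀ ⦃a b c d⦄, G.Adj a b → G.Adj c d → a = c ∨ a = d ∨ b = c ∨ b = d)
    {a b c : V} (hab : G.Adj a b) (hbc : G.Adj b c) (hac : G.Adj a c) :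
    Nonempty (G ≃g (⊤ : SimpleGraph (Fin 3))) := by
  classical
  have hall := hG.eq_or_eq_or_eq_of_adj_of_adj_of_adj hmeet hab hbc hac
  have htop : G = ⊤ := eq_top_iff_forall_ne_adj.2 fun v w hvw => by
    rcases hall v with rfl | rfl | rfl <;> rcases hall w with rfl | rfl | rfl <;>
      first | exact absurd rfl hvw | assumption | exact Adj.symm ‹_›
  have hcard : Fintype.card V = 3 := by
    rw [← card_univ, ← eq_univ_of_forall (s := {a, b, c}) fun v => by simpa using hall v,
      card_insert_of_notMem (by simp [hab.ne, hac.ne]), card_pair hbc.ne]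
  subst htop
  exact ⟨Iso.completeGraph (Fintype.equivFinOfCardEq hcard)⟩

lemma exists_adj_adj_of_adj
    (hmeet : ∀ ⦃a b c d⦄, G.Adj a b → G.Adj c d → a = c ∨ a = d ∨ b = c ∨ b = d)
    {a b x y x' y' : V} (hab : G.Adj a b) (hxy : G.Adj x y) (hxa : x ≠ a) (hya : y ≠ a)
    (hxy' : G.Adj x' y') (hxb : x' ≠ b) (hyb : y' ≠ b) : ∃ c, G.Adj b c ∧ G.Adj a c := by
  obtain ⟨c, hca, hbc⟩ : ∃ c, c ≠ a ∧ G.Adj b c := by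
    rcases hmeet hab hxy with h | h | rfl | rfl
    exacts [absurd h.symm hxa, absurd h.symm hya, ⟨y, hya, hxy⟩, ⟨x, hxa, hxy.symm⟩]
  obtain ⟨c', hcb, hac⟩ : ∃ c', c' ≠ b ∧ G.Adj a c' := by
    rcases hmeet hab hxy' with rfl | rfl | h | h
    exacts [⟨y', hyb, hxy'⟩, ⟨x', hxb, hxy'.symm⟩, absurd h.symm hxb, absurd h.symm hyb]
  obtain rfl : c = c' := by
    rcases hmeet hbc hac with h | h | h | h
    exacts [absurd h hab.ne.symm, absurd h.symm hcb, absurd h hca, h]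
  exact ⟨c, hbc, hac⟩

theorem Connected.nonempty_iso_starGraph_or_top [Fintype V] (hG : G.Connected)
    (h3 : 3 ≤ Fintype.card V)
    (hmeet : ∀ ⦃a b c d⦄, G.Adj a b → G.Adj c d → a = c ∨ a = d ∨ b = c ∨ b = d) :
    (∃ m : ℕ, 2 ≤ m ∧ Nonempty (G ≃g _root_.starGraph m)) ∨
      Nonempty (G ≃g (⊤ : SimpleGraph (Fin 3))) := by
  have : Nontrivial V := Fintype.one_lt_card_iff_nontrivial.1 (by omega)
  obtain ⟨a, b, hab⟩ : ∃ a b, G.Adj a b :=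
    ⟨Classical.arbitrary V, hG.preconnected.exists_adj_of_nontrivial _⟩
  have hstar (c : V) (hc : ∀ ⦃x y⦄, G.Adj x y → x = c ∨ y = c) :
      ∃ m : ℕ, 2 ≤ m ∧ Nonempty (G ≃g _root_.starGraph m) :=
    ⟨_, by omega, hG.eq_starGraph hc ▸ nonempty_starGraph_iso c⟩
  by_cases ha : ∀ ⦃x y⦄, G.Adj x y → x = a ∨ y = a
  · exact .inl (hstar a ha)
  by_cases hb : ∀ ⦃x y⦄, G.Adj x y → x = b ∨ y = b
  · exact .inl (hstar b hb)
  push Not at ha hb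
  obtain ⟨x, y, hxy, hxa, hya⟩ := ha
  obtain ⟨x', y', hxy', hxb, hyb⟩ := hb
  obtain ⟨c, hbc, hac⟩ := exists_adj_adj_of_adj hmeet hab hxy hxa hya hxy' hxb hyb
  exact .inr (hG.nonempty_iso_top_of_adj_of_adj_of_adj hmeet hab hbc hac)

lemma IsMatchingFinset.mono (hs : G.IsMatchingFinset s) (hts : t ⊆ s) : G.IsMatchingFinset t :=
  ⟨(coe_subset.2 hts).trans hs.1, hs.2.mono (coe_subset.2 hts)⟩

lemma IsMatchingFinset.eq_of_mem (hs : G.IsMatchingFinset s) {e f : Sym2 V} (he : e ∈ s)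
    (hf : f ∈ s) {v : V} (hve : v ∈ e) (hvf : v ∈ f) : e = f := by
  by_contra hne
  exact hs.2 he hf hne v hve hvf

variable (G) in
def NoEdgesBetween (A B : Finset V) : Prop := ∀ a ∈ A, ∀ b ∈ B, ¬G.Adj a b

lemma NoEdgesBetween.symm {A B : Finset V} (h : G.NoEdgesBetween A B) : G.NoEdgesBetween B A :=
  fun b hb a ha hba => h a ha b hb hba.symm

variable (G) in
open scoped Classical in
noncomputable def matchingsIn (S : Finset V) : Finset (Finset (Sym2 V)) :=
  {s ∈ S.sym2.powerset | G.IsMatchingFinset s}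

lemma mem_matchingsIn :
    s ∈ G.matchingsIn S ↔ (∀ e ∈ s, ∀ v ∈ e, v ∈ S) ∧ G.IsMatchingFinset s := by
  simp [matchingsIn, subset_iff, mem_sym2_iff]

lemma empty_mem_matchingsIn : ∅ ∈ G.matchingsIn S :=
  mem_matchingsIn.2 ⟨by simp, by simp [IsMatchingFinset]⟩

lemma matchingsIn_empty : G.matchingsIn ∅ = {∅} := by
  refine eq_singleton_iff_unique_mem.2 ⟨empty_mem_matchingsIn, fun s hs => ?_⟩
  refine eq_empty_of_forall_notMem fun e he => ?_
  simpa using (mem_matchingsIn.1 hs).1 e he _ (Sym2.out_fst_mem e)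

variable (G) in
/-- The matching polynomial `μ(G[S], x)` of the subgraph of `G` induced on `S`. -/
noncomputable def matchingPolyIn (S : Finset V) : ℝ[X] :=
  ∑ s ∈ G.matchingsIn S, C ((-1) ^ #s) * X ^ (#S - 2 * #s)

@[simp]
lemma matchingPolyIn_empty : G.matchingPolyIn ∅ = 1 := by
  simp [matchingPolyIn, matchingsIn_empty]

lemma natDegree_matchingPolyIn_le : (G.matchingPolyIn S).natDegree ≤ #S :=
  natDegree_sum_le_of_forall_le _ _ fun _ _ => (natDegree_C_mul_X_pow_le _ _).trans (by omega)

variable [DecidableEq V]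

lemma isMatchingFinset_insert {e : Sym2 V} (he : e ∈ G.edgeSet) (ht : G.IsMatchingFinset t)
    (hdisj : ∀ f ∈ t, ∀ v ∈ e, v ∉ f) : G.IsMatchingFinset (insert e t) := by
  refine ⟨by simpa [Set.insert_subset_iff] using ⟨he, ht.1⟩, ?_⟩
  rw [coe_insert]
  exact ht.2.insert fun f hf _ => ⟨hdisj f hf, fun v hvf hve => hdisj f hf v hve hvf⟩

lemma IsMatchingFinset.card_biUnion_toFinset (hs : G.IsMatchingFinset s) :
    #(s.biUnion Sym2.toFinset) = 2 * #s := by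
  rw [card_biUnion, sum_const_nat fun e he =>
    Sym2.card_toFinset_of_not_isDiag e (G.not_isDiag_of_mem_edgeSet (hs.1 he)), mul_comm]
  intro e he f hf hne
  exact Finset.disjoint_left.2 fun v hve hvf =>
    hs.2 he hf hne v (Sym2.mem_toFinset.1 hve) (Sym2.mem_toFinset.1 hvf)

lemma biUnion_toFinset_subset_of_mem_matchingsIn (hs : s ∈ G.matchingsIn S) :
    s.biUnion Sym2.toFinset ⊆ S := by
  intro v hv
  obtain ⟨e, he, hve⟩ := mem_biUnion.1 hv
  exact (mem_matchingsIn.1 hs).1 e he v (Sym2.mem_toFinset.1 hve)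

lemma card_filter_forall_notMem_of_mem_matchingsIn (hs : s ∈ G.matchingsIn S) :
    #{u ∈ S | ∀ e ∈ s, u ∉ e} = #S - 2 * #s := by
  rw [← (mem_matchingsIn.1 hs).2.card_biUnion_toFinset,
    ← card_sdiff_of_subset (biUnion_toFinset_subset_of_mem_matchingsIn hs)]
  congr 1
  ext u
  simp [Sym2.mem_toFinset]

lemma two_mul_card_le_of_mem_matchingsIn (hs : s ∈ G.matchingsIn S) : 2 * #s ≤ #S := by
  rw [← (mem_matchingsIn.1 hs).2.card_biUnion_toFinset]
  exact card_le_card (biUnion_toFinset_subset_of_mem_matchingsIn hs)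

lemma matchingsIn_erase (u : V) :
    G.matchingsIn (S.erase u) = {s ∈ G.matchingsIn S | ∀ e ∈ s, u ∉ e} := by
  ext s
  simp only [mem_filter, mem_matchingsIn, mem_erase]
  constructor
  · rintro ⟨hS, hM⟩
    exact ⟨⟨fun e he w hw => (hS e he w hw).2, hM⟩, fun e he hu => (hS e he u hu).1 rfl⟩
  · rintro ⟨⟨hS, hM⟩, hu⟩
    exact ⟨fun e he w hw => ⟨fun h => hu e he (h ▸ hw), hS e he w hw⟩, hM⟩

lemma mk_notMem_of_mem_matchingsIn_erase_erase (ht : t ∈ G.matchingsIn ((S.erase u).erase v)) :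
    s(u, v) ∉ t := fun h => by
  simpa using (mem_matchingsIn.1 ht).1 _ h u (Sym2.mem_mk_left u v)

lemma insert_mem_matchingsIn (huv : G.Adj u v) (hu : u ∈ S) (hv : v ∈ S)
    (ht : t ∈ G.matchingsIn ((S.erase u).erase v)) : insert s(u, v) t ∈ G.matchingsIn S := by
  obtain ⟨hS, hM⟩ := mem_matchingsIn.1 ht
  have hS' : ∀ f ∈ t, ∀ w ∈ f, w ≠ v ∧ w ≠ u ∧ w ∈ S := fun f hf w hw => by
    simpa using hS f hf w hw
  refine mem_matchingsIn.2 ⟨?_, isMatchingFinset_insert huv hM ?_⟩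
  · intro f hf w hw
    rcases mem_insert.1 hf with rfl | hf
    · rcases Sym2.mem_iff.1 hw with rfl | rfl <;> assumption
    · exact (hS' f hf w hw).2.2
  · intro f hf w hw hwf
    rcases Sym2.mem_iff.1 hw with rfl | rfl
    exacts [(hS' f hf _ hwf).2.1 rfl, (hS' f hf _ hwf).1 rfl]

lemma erase_mem_matchingsIn (hs : s ∈ G.matchingsIn S) (huv : s(u, v) ∈ s) :
    s.erase s(u, v) ∈ G.matchingsIn ((S.erase u).erase v) := by
  obtain ⟨hS, hM⟩ := mem_matchingsIn.1 hs
  refine mem_matchingsIn.2 ⟨fun f hf w hw => ?_, hM.mono (erase_subset _ _)⟩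
  obtain ⟨hfe, hfs⟩ := mem_erase.1 hf
  refine mem_erase.2 ⟨?_, mem_erase.2 ⟨?_, hS f hfs w hw⟩⟩ <;> rintro rfl
  exacts [hfe (hM.eq_of_mem hfs huv hw (Sym2.mem_mk_right _ _)),
    hfe (hM.eq_of_mem hfs huv hw (Sym2.mem_mk_left _ _))]

lemma coeff_matchingPolyIn {k : ℕ} (hk : 2 * k ≤ #S) :
    (G.matchingPolyIn S).coeff (#S - 2 * k) = (-1) ^ k * #{s ∈ G.matchingsIn S | #s = k} := by
  rw [matchingPolyIn, finsetSum_coeff, card_filter, Nat.cast_sum, mul_sum]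
  refine sum_congr rfl fun s hs => ?_
  have := two_mul_card_le_of_mem_matchingsIn hs
  rw [coeff_C_mul_X_pow]
  by_cases hsk : #s = k
  · simp [hsk]
  · simp [hsk, show #S - 2 * k ≠ #S - 2 * #s by omega]

lemma coeff_matchingPolyIn_card : (G.matchingPolyIn S).coeff #S = 1 := by
  have h := coeff_matchingPolyIn (G := G) (S := S) (k := 0) (by omega)
  have h0 : {s ∈ G.matchingsIn S | #s = 0} = {∅} := by
    ext s
    simp only [mem_filter, card_eq_zero, mem_singleton]
    exact ⟨And.right, fun hs => ⟨hs ▸ empty_mem_matchingsIn, hs⟩⟩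
  rw [h0] at h
  simpa using h

lemma monic_matchingPolyIn : (G.matchingPolyIn S).Monic :=
  monic_of_natDegree_le_of_coeff_eq_one _ natDegree_matchingPolyIn_le coeff_matchingPolyIn_card

lemma natDegree_matchingPolyIn : (G.matchingPolyIn S).natDegree = #S :=
  natDegree_eq_of_le_of_coeff_ne_zero natDegree_matchingPolyIn_le
    (by simp [coeff_matchingPolyIn_card])

lemma matchingPolynomial_eq_matchingPolyIn_univ [Fintype V] :
    G.matchingPolynomial = G.matchingPolyIn univ := by
  have hnum (k : ℕ) : G.numMatchings k = #{s ∈ G.matchingsIn univ | #s = k} := by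
    rw [numMatchings, ← Set.ncard_coe_finset]
    congr 1
    ext s
    simp [mem_matchingsIn, and_comm]
  rw [matchingPolynomial, matchingPolyIn, card_univ, ← sum_fiberwise_of_maps_to
    (g := card) (t := range (Fintype.card V + 1)) fun s hs => ?_]
  · refine sum_congr rfl fun k _ => ?_
    rw [hnum, sum_congr rfl fun s hs => by rw [(mem_filter.1 hs).2], sum_const, nsmul_eq_mul]
    simp only [map_mul, map_pow, map_neg, map_one, map_natCast]
    ring
  · have := two_mul_card_le_of_mem_matchingsIn hs
    rw [card_univ] at this
    exact mem_range.2 (by omega)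

lemma sum_matchingsIn_covering_eq_sum_adj [DecidableRel G.Adj] {M : Type*} [AddCommMonoid M]
    (f : Finset (Sym2 V) → M) :
    ∑ s ∈ G.matchingsIn S with ¬∀ e ∈ s, u ∉ e, f s =
      ∑ v ∈ S with G.Adj u v, ∑ s ∈ G.matchingsIn S with s(u, v) ∈ s, f s := by
  have hcover : {s ∈ G.matchingsIn S | ¬∀ e ∈ s, u ∉ e} =
      {v ∈ S | G.Adj u v}.biUnion fun v => {s ∈ G.matchingsIn S | s(u, v) ∈ s} := by
    ext s
    simp only [mem_filter, mem_biUnion, not_forall, not_not]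
    constructor
    · rintro ⟨hs, e, he, hue⟩
      obtain ⟨v, rfl⟩ := Sym2.mem_iff_exists.1 hue
      obtain ⟨hS, hM⟩ := mem_matchingsIn.1 hs
      exact ⟨v, ⟨hS _ he v (Sym2.mem_mk_right u v), hM.1 he⟩, hs, he⟩
    · rintro ⟨v, -, hs, he⟩
      exact ⟨hs, _, he, Sym2.mem_mk_left u v⟩
  rw [hcover, sum_biUnion fun v _ w _ hvw => Finset.disjoint_left.2 fun s hv hw => hvw ?_]
  obtain ⟨hs, hv⟩ := mem_filter.1 hv
  exact Sym2.congr_right.1 <| (mem_matchingsIn.1 hs).2.eq_of_mem hv (mem_filter.1 hw).2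
    (Sym2.mem_mk_left u v) (Sym2.mem_mk_left u w)

lemma sum_matchingsIn_mk_mem (huv : G.Adj u v) (hu : u ∈ S) (hv : v ∈ S) :
    ∑ s ∈ G.matchingsIn S with s(u, v) ∈ s, C ((-1) ^ #s) * X ^ (#S - 2 * #s) =
      -G.matchingPolyIn ((S.erase u).erase v) := by
  rw [matchingPolyIn, ← sum_neg_distrib]
  refine sum_nbij' (fun s => s.erase s(u, v)) (insert s(u, v)) (fun s hs => ?_)
    (fun t ht => ?_) (fun s hs => insert_erase (mem_filter.1 hs).2)
    (fun t ht => erase_insert (mk_notMem_of_mem_matchingsIn_erase_erase ht)) fun s hs => ?_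
  · exact erase_mem_matchingsIn (mem_filter.1 hs).1 (mem_filter.1 hs).2
  · exact mem_filter.2 ⟨insert_mem_matchingsIn huv hu hv ht, mem_insert_self _ _⟩
  · have hcard := card_erase_add_one (mem_filter.1 hs).2
    have hSuv : #((S.erase u).erase v) = #S - 2 := by
      rw [card_erase_of_mem (mem_erase.2 ⟨(G.ne_of_adj huv).symm, hv⟩), card_erase_of_mem hu]
      rfl
    rw [hSuv, ← hcard, pow_succ, show #S - 2 * (#(s.erase s(u, v)) + 1) =
      #S - 2 - 2 * #(s.erase s(u, v)) by omega]
    simp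

theorem matchingPolyIn_eq_X_mul_sub [DecidableRel G.Adj] (hu : u ∈ S) :
    G.matchingPolyIn S = X * G.matchingPolyIn (S.erase u) -
      ∑ v ∈ S with G.Adj u v, G.matchingPolyIn ((S.erase u).erase v) := by
  rw [matchingPolyIn, ← sum_filter_add_sum_filter_not _ (fun s => ∀ e ∈ s, u ∉ e),
    ← matchingsIn_erase, sum_matchingsIn_covering_eq_sum_adj, sub_eq_add_neg, ← sum_neg_distrib,
    matchingPolyIn, mul_sum]
  congr 1
  · refine sum_congr rfl fun s hs => ?_
    have hs2 := two_mul_card_le_of_mem_matchingsIn hs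
    have hS := card_pos.2 ⟨u, hu⟩
    rw [card_erase_of_mem hu] at hs2 ⊢
    rw [show #S - 2 * #s = #S - 1 - 2 * #s + 1 by omega, pow_succ]
    ring
  · exact sum_congr rfl fun v hv =>
      sum_matchingsIn_mk_mem (mem_filter.1 hv).2 hu (mem_filter.1 hv).1

theorem matchingPolyIn_union {A B : Finset V} (hAB : Disjoint A B) (hsep : G.NoEdgesBetween A B) :
    G.matchingPolyIn (A ∪ B) = G.matchingPolyIn A * G.matchingPolyIn B := by
  classical
  induction A using Finset.strongInduction with
  | H A ih =>
  rcases A.eq_empty_or_nonempty with rfl | ⟨u, hu⟩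
  · simp
  have ih' {A' : Finset V} (h : A' ⊆ A.erase u) :
      G.matchingPolyIn (A' ∪ B) = G.matchingPolyIn A' * G.matchingPolyIn B :=
    have hA' : A' ⊆ A := h.trans (erase_subset u A)
    ih A' (h.trans_ssubset (erase_ssubset hu)) (disjoint_of_subset_left hA' hAB)
      fun a ha => hsep a (hA' ha)
  have hnbr : {v ∈ A ∪ B | G.Adj u v} = {v ∈ A | G.Adj u v} := by
    ext v
    simp only [mem_filter, mem_union]
    exact ⟨fun ⟨hv, huv⟩ => ⟨hv.resolve_right fun hvB => hsep u hu v hvB huv, huv⟩,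
      fun ⟨hv, huv⟩ => ⟨Or.inl hv, huv⟩⟩
  rw [matchingPolyIn_eq_X_mul_sub (mem_union_left B hu), matchingPolyIn_eq_X_mul_sub hu, hnbr,
    erase_union_distrib, erase_eq_of_notMem (Finset.disjoint_left.1 hAB hu), ih' subset_rfl,
    sub_mul, sum_mul, mul_assoc]
  congr 1
  refine sum_congr rfl fun v hv => ?_
  rw [erase_union_distrib, erase_eq_of_notMem (Finset.disjoint_left.1 hAB (mem_filter.1 hv).1),
    ih' (erase_subset v _)]

lemma matchingPolyIn_eq_mul_sdiff (hT : T ⊆ W) (hsep : G.NoEdgesBetween T (W \ T)) :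
    G.matchingPolyIn W = G.matchingPolyIn T * G.matchingPolyIn (W \ T) := by
  rw [← matchingPolyIn_union disjoint_sdiff hsep, union_sdiff_of_subset hT]

theorem derivative_matchingPolyIn :
    derivative (G.matchingPolyIn S) = ∑ u ∈ S, G.matchingPolyIn (S.erase u) := by
  have herase (u) (hu : u ∈ S) : G.matchingPolyIn (S.erase u) = ∑ s ∈ G.matchingsIn S,
      if ∀ e ∈ s, u ∉ e then C ((-1) ^ #s) * X ^ (#S - 1 - 2 * #s) else 0 := by
    rw [matchingPolyIn, matchingsIn_erase, sum_filter, card_erase_of_mem hu]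
  rw [sum_congr rfl herase, sum_comm, matchingPolyIn, derivative_sum]
  refine sum_congr rfl fun s hs => ?_
  rw [← sum_filter, sum_const, card_filter_forall_notMem_of_mem_matchingsIn hs,
    derivative_C_mul_X_pow, nsmul_eq_mul, C_mul, map_natCast,
    show #S - 2 * #s - 1 = #S - 1 - 2 * #s by omega]
  ring

theorem matchingPolyIn_comp_neg_X :
    (G.matchingPolyIn S).comp (-X) = C ((-1) ^ #S) * G.matchingPolyIn S := by
  rw [matchingPolyIn, Polynomial.sum_comp, mul_sum]
  refine sum_congr rfl fun s hs => ?_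
  obtain ⟨m, hm⟩ : ∃ m, #S = m + 2 * #s := ⟨#S - 2 * #s, by
    have := two_mul_card_le_of_mem_matchingsIn hs; omega⟩
  rw [mul_comp, C_comp, X_pow_comp, neg_pow, hm, Nat.add_sub_cancel, pow_add, pow_mul]
  simp only [map_mul, map_pow, map_neg, map_one]
  ring

theorem im_aeval_matchingPolyIn_mul_conj_pos {z : ℂ} (hz : 0 < z.im) {u : V} (hu : u ∈ S) :
    0 < (aeval z (G.matchingPolyIn S) * conj (aeval z (G.matchingPolyIn (S.erase u)))).im := by
  classical
  induction S using Finset.strongInduction generalizing u with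
  | H S ih =>
  have hW : S.erase u ⊂ S := erase_ssubset hu
  have hne : aeval z (G.matchingPolyIn (S.erase u)) ≠ 0 := by
    rcases (S.erase u).eq_empty_or_nonempty with hW0 | ⟨v, hv⟩
    · simp [hW0]
    · intro h0
      simpa [h0] using ih _ hW hv
  have hterm (v) (hv : v ∈ S ∧ G.Adj u v) : (aeval z (G.matchingPolyIn ((S.erase u).erase v)) *
      conj (aeval z (G.matchingPolyIn (S.erase u)))).im < 0 := by
    rw [Complex.im_mul_conj_eq_neg, neg_lt_zero]
    exact ih _ hW (mem_erase.2 ⟨(G.ne_of_adj hv.2).symm, hv.1⟩)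
  have hpos : 0 < (z * (Complex.normSq (aeval z (G.matchingPolyIn (S.erase u))) : ℂ)).im := by
    rw [Complex.im_mul_ofReal]
    exact mul_pos hz (Complex.normSq_pos.2 hne)
  have hneg := sum_nonpos fun v hv => (hterm v (mem_filter.1 hv)).le
  rw [matchingPolyIn_eq_X_mul_sub hu]
  simp only [map_sub, map_mul, aeval_X, map_sum, sub_mul, sum_mul, mul_assoc, Complex.mul_conj,
    Complex.sub_im, Complex.im_sum]
  linarith

theorem aeval_matchingPolyIn_ne_zero {z : ℂ} (hz : z.im ≠ 0) :
    aeval z (G.matchingPolyIn S) ≠ 0 := by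
  wlog hpos : 0 < z.im generalizing z
  · rw [← (RingHom.injective (starRingEnd ℂ)).ne_iff, map_zero, ← aeval_conj]
    exact this (by simpa using hz) (by simpa using lt_of_le_of_ne (not_lt.1 hpos) hz)
  rcases S.eq_empty_or_nonempty with rfl | ⟨u, hu⟩
  · simp
  · intro h0
    simpa [h0] using im_aeval_matchingPolyIn_mul_conj_pos (G := G) hpos hu

theorem card_roots_matchingPolyIn : Multiset.card (G.matchingPolyIn S).roots = #S := by
  rw [card_roots_eq_natDegree_of_aeval_ne_zero fun z hz => aeval_matchingPolyIn_ne_zero hz,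
    natDegree_matchingPolyIn]

variable (G) in
/-- The subgraph of `G` induced on `S` is connected. -/
def ConnectedOn (S : Finset V) : Prop :=
  ∀ T ⊆ S, T.Nonempty → G.NoEdgesBetween T (S \ T) → T = S

lemma Connected.connectedOn_univ [Fintype V] (hG : G.Connected) : G.ConnectedOn univ := by
  intro T _ ⟨a, ha⟩ hsep
  refine eq_univ_of_forall fun b => by_contra fun hb => ?_
  obtain ⟨d, -, hd, hd'⟩ := (hG.preconnected a b).some.exists_boundary_dart (T : Set V) ha hb
  exact hsep _ hd _ (mem_sdiff.2 ⟨mem_univ _, hd'⟩) d.adj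

lemma ConnectedOn.exists_adj (hS : G.ConnectedOn S) (hu : u ∈ S) (hT : T ⊆ S.erase u)
    (hTne : T.Nonempty) (hsep : G.NoEdgesBetween T (S.erase u \ T)) : ∃ v ∈ T, G.Adj u v := by
  by_contra! hnadj
  have hTS : T = S := hS T (hT.trans (erase_subset u S)) hTne fun a ha b hb hab => by
    obtain rfl | hbu := eq_or_ne b u
    · exact hnadj a ha hab.symm
    · exact hsep a ha b (by simpa [hbu] using hb) hab
  exact notMem_erase u S (hT (hTS ▸ hu))

theorem exists_connectedOn_isRoot (hr : (G.matchingPolyIn W).IsRoot r) :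
    ∃ T ⊆ W, G.ConnectedOn T ∧ G.NoEdgesBetween T (W \ T) ∧
      (G.matchingPolyIn T).IsRoot r := by
  induction W using Finset.strongInduction with
  | H W ih =>
  by_cases hW : G.ConnectedOn W
  · exact ⟨W, subset_rfl, hW, by simp [NoEdgesBetween], hr⟩
  simp only [ConnectedOn, not_forall] at hW
  obtain ⟨T, hTW, hTne, hsep, hTW'⟩ := hW
  have hpiece (P) (hP : P ⊂ W) (hsepP : G.NoEdgesBetween P (W \ P))
      (hrP : (G.matchingPolyIn P).IsRoot r) :
      ∃ T ⊆ W, G.ConnectedOn T ∧ G.NoEdgesBetween T (W \ T) ∧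
      (G.matchingPolyIn T).IsRoot r := by
    obtain ⟨T', hT'P, hT', hsep', hr'⟩ := ih P hP hrP
    refine ⟨T', hT'P.trans hP.subset, hT', fun a ha b hb => ?_, hr'⟩
    by_cases hbP : b ∈ P
    · exact hsep' a ha b (mem_sdiff.2 ⟨hbP, (mem_sdiff.1 hb).2⟩)
    · exact hsepP a (hT'P ha) b (mem_sdiff.2 ⟨(mem_sdiff.1 hb).1, hbP⟩)
  rw [IsRoot, matchingPolyIn_eq_mul_sdiff hTW hsep, eval_mul, mul_eq_zero] at hr
  rcases hr with hr | hr
  · exact hpiece T (ssubset_of_subset_of_ne hTW hTW') hsep hr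
  · refine hpiece (W \ T) (sdiff_ssubset hTW hTne) ?_ hr
    rw [Finset.sdiff_sdiff_eq_self hTW]
    exact hsep.symm

theorem exists_isRoot_ge_of_isRoot_erase (hu : u ∈ S)
    (hr : (G.matchingPolyIn (S.erase u)).IsRoot r) :
    ∃ r', r ≤ r' ∧ (G.matchingPolyIn S).IsRoot r' := by
  classical
  induction S using Finset.strongInduction generalizing u r with
  | H S ih =>
  obtain ⟨s, hrs, hs, hsmax⟩ :=
    exists_isGreatest_isRoot monic_matchingPolyIn.ne_zero hr
  have hterm (v) (hv : v ∈ S ∧ G.Adj u v) :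
      0 ≤ (G.matchingPolyIn ((S.erase u).erase v)).eval s := by
    refine zero_le_eval_of_roots_le_of_leadingCoeff_nonneg (fun y hy => ?_)
      (by simp [monic_matchingPolyIn.leadingCoeff])
    obtain ⟨y', hyy', hy'⟩ :=
      ih _ (erase_ssubset hu) (mem_erase.2 ⟨(G.ne_of_adj hv.2).symm, hv.1⟩) hy
    exact hyy'.trans (hsmax hy')
  have heval : (G.matchingPolyIn S).eval s ≤ 0 := by
    rw [matchingPolyIn_eq_X_mul_sub hu, eval_sub, eval_mul, eval_X, hs.eq_zero, mul_zero,
      eval_finsetSum, zero_sub, neg_nonpos]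
    exact sum_nonneg fun v hv => hterm v (mem_filter.1 hv)
  obtain ⟨r', hsr', hr'⟩ := exists_isRoot_ge_of_eval_nonpos monic_matchingPolyIn heval
  exact ⟨r', hrs.trans hsr', hr'⟩

theorem ConnectedOn.exists_isRoot_gt_of_isRoot_erase (hS : G.ConnectedOn S) (hu : u ∈ S)
    (hr : (G.matchingPolyIn (S.erase u)).IsRoot r) :
    ∃ r', r < r' ∧ (G.matchingPolyIn S).IsRoot r' := by
  classical
  induction S using Finset.strongInduction generalizing u r with
  | H S ih =>
  obtain ⟨s, hrs, hs, hsmax⟩ := exists_isGreatest_isRoot monic_matchingPolyIn.ne_zero hr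
  obtain ⟨T, hTW, hT, hsep, hsT⟩ := exists_connectedOn_isRoot hs
  have hTne : T.Nonempty := nonempty_iff_ne_empty.2 fun h => by simp [h] at hsT
  obtain ⟨v, hvT, huv⟩ := hS.exists_adj hu hTW hTne hsep
  have hfac := matchingPolyIn_eq_mul_sdiff hTW hsep
  have hfac' : G.matchingPolyIn ((S.erase u).erase v) =
      G.matchingPolyIn (T.erase v) * G.matchingPolyIn (S.erase u \ T) := by
    have hdiff : (S.erase u).erase v \ T.erase v = S.erase u \ T := by
      ext x
      by_cases hx : x = v <;> simp [hx, hvT]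
    rw [← hdiff]
    refine matchingPolyIn_eq_mul_sdiff (erase_subset_erase v hTW) fun a ha b hb => ?_
    rw [hdiff] at hb
    exact hsep a (mem_of_mem_erase ha) b hb
  have hsTv : ¬(G.matchingPolyIn (T.erase v)).IsRoot s := fun hsTv => by
    obtain ⟨r', hsr', hr'⟩ := ih T (hTW.trans_ssubset (erase_ssubset hu)) hT hvT hsTv
    exact (hsmax (show IsRoot _ r' by rw [IsRoot.def, hfac, eval_mul, hr', zero_mul])).not_gt hsr'
  have hmult : (G.matchingPolyIn ((S.erase u).erase v)).rootMultiplicity s <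
      (G.matchingPolyIn (S.erase u)).rootMultiplicity s := by
    have hne : G.matchingPolyIn T * G.matchingPolyIn (S.erase u \ T) ≠ 0 := by
      rw [← hfac]; exact monic_matchingPolyIn.ne_zero
    have hne' : G.matchingPolyIn (T.erase v) * G.matchingPolyIn (S.erase u \ T) ≠ 0 := by
      rw [← hfac']; exact monic_matchingPolyIn.ne_zero
    rw [hfac, hfac', rootMultiplicity_mul hne, rootMultiplicity_mul hne',
      rootMultiplicity_eq_zero hsTv]
    exact Nat.add_lt_add_right ((rootMultiplicity_pos monic_matchingPolyIn.ne_zero).2 hsT) _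
  have hroots (w) (hw : w ∈ S ∧ G.Adj u w) (y)
      (hy : (G.matchingPolyIn ((S.erase u).erase w)).IsRoot y) : y ≤ s := by
    obtain ⟨y', hyy', hy'⟩ :=
      exists_isRoot_ge_of_isRoot_erase (mem_erase.2 ⟨(G.ne_of_adj hw.2).symm, hw.1⟩) hy
    exact hyy'.trans (hsmax hy')
  obtain ⟨r', hsr', hr'⟩ := exists_isRoot_gt_of_eq_X_mul_sub_sum monic_matchingPolyIn
    (matchingPolyIn_eq_X_mul_sub hu) (fun _ _ => monic_matchingPolyIn)
    (fun w hw => hroots w (mem_filter.1 hw))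
    ⟨v, mem_filter.2 ⟨mem_of_mem_erase (hTW hvT), huv⟩, hmult⟩
  exact ⟨r', hrs.trans_lt hsr', hr'⟩

theorem ConnectedOn.rootMultiplicity_eq_one (hS : G.ConnectedOn S)
    (hθ : IsGreatest {x | (G.matchingPolyIn S).IsRoot x} θ) :
    (G.matchingPolyIn S).rootMultiplicity θ = 1 := by
  have hne := monic_matchingPolyIn (G := G) (S := S).ne_zero
  have hSne : S.Nonempty := nonempty_iff_ne_empty.2 fun h => by simpa [h] using hθ.1
  have hderiv : 0 < (derivative (G.matchingPolyIn S)).eval θ := by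
    rw [derivative_matchingPolyIn, eval_finsetSum]
    refine sum_pos (fun u hu => zero_lt_eval_of_roots_lt_of_leadingCoeff_nonneg (fun y hy => ?_)
      (by simp [monic_matchingPolyIn.leadingCoeff])) hSne
    obtain ⟨y', hyy', hy'⟩ := hS.exists_isRoot_gt_of_isRoot_erase hu hy
    exact hyy'.trans_le (hθ.2 hy')
  refine le_antisymm (not_lt.1 fun h => ?_) ((rootMultiplicity_pos hne).2 hθ.1)
  exact hderiv.ne' ((one_lt_rootMultiplicity_iff_isRoot hne).1 h).2

theorem forall_adj_meet_of_coeff_matchingPolyIn_univ_eq_zero [Fintype V]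
    (h : (G.matchingPolyIn univ).coeff (Fintype.card V - 4) = 0) :
    ∀ ⦃a b c d⦄, G.Adj a b → G.Adj c d → a = c ∨ a = d ∨ b = c ∨ b = d := by
  intro a b c d hab hcd
  by_contra! hne
  have hdisj : s(a, b) ≠ s(c, d) := by simp [hne.1, hne.2.1]
  have hs : {s(a, b), s(c, d)} ∈ G.matchingsIn univ := by
    refine mem_matchingsIn.2
      ⟨by simp, isMatchingFinset_insert hab ⟨by simpa using hcd, by simp⟩ ?_⟩
    simp only [mem_singleton, forall_eq, Sym2.mem_iff]
    rintro v (rfl | rfl) (h | h) <;> simp_all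
  have h4 := two_mul_card_le_of_mem_matchingsIn hs
  rw [card_pair hdisj, card_univ] at h4
  have hcoeff := coeff_matchingPolyIn (G := G) (S := univ) (k := 2) (by rw [card_univ]; omega)
  rw [card_univ, h, eq_comm] at hcoeff
  have hempty : {s ∈ G.matchingsIn univ | #s = 2} = ∅ := by
    simpa using hcoeff
  have hmem : {s(a, b), s(c, d)} ∈ {s ∈ G.matchingsIn univ | #s = 2} :=
    mem_filter.2 ⟨hs, card_pair hdisj⟩
  simp [hempty] at hmem

lemma three_le_card_of_card_roots_toFinset_eq_three [Fintype V]
    (h : (G.matchingPolyIn univ).roots.toFinset.card = 3) : 3 ≤ Fintype.card V := by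
  simpa [h, card_roots_matchingPolyIn] using
    Multiset.toFinset_card_le (G.matchingPolyIn univ).roots

theorem Connected.forall_adj_meet_of_card_roots_toFinset_eq_three [Fintype V]
    (hG : G.Connected) (h : (G.matchingPolyIn univ).roots.toFinset.card = 3) :
    ∀ ⦃a b c d⦄, G.Adj a b → G.Adj c d → a = c ∨ a = d ∨ b = c ∨ b = d := by
  have hsymm : (G.matchingPolyIn univ).roots.map Neg.neg = (G.matchingPolyIn univ).roots := by
    rw [← roots_comp_neg_X, matchingPolyIn_comp_neg_X, roots_C_mul _ (by simp)]
  obtain ⟨x, hx⟩ := card_pos.1 (h ▸ three_pos : 0 < #(G.matchingPolyIn univ).roots.toFinset)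
  obtain ⟨θ, -, hθ⟩ := exists_isGreatest_isRoot monic_matchingPolyIn.ne_zero
    (isRoot_of_mem_roots (Multiset.mem_toFinset.1 hx))
  have hμ := eq_X_pow_mul_of_card_roots_toFinset_eq_three monic_matchingPolyIn
    (card_roots_matchingPolyIn.trans natDegree_matchingPolyIn.symm) hsymm h hθ
    (hG.connectedOn_univ.rootMultiplicity_eq_one hθ)
  have hn := three_le_card_of_card_roots_toFinset_eq_three h
  refine forall_adj_meet_of_coeff_matchingPolyIn_univ_eq_zero ?_
  rw [hμ, natDegree_matchingPolyIn, card_univ, coeff_X_pow_mul', if_neg (by omega)]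

end SimpleGraph

/-- A connected graph whose matching polynomial has exactly three distinct (real) roots is a star
`K_{1,m}` with `m ≥ 2`, or the triangle `K₃`. -/
theorem star_or_K3_of_three_distinct_matching_roots {V : Type*} [Fintype V]
    (G : SimpleGraph V) (hG : G.Connected)
    (h : G.matchingPolynomial.roots.toFinset.card = 3) :
    (∃ m : ℕ, 2 ≤ m ∧ Nonempty (G ≃g starGraph m)) ∨
      Nonempty (G ≃g (⊤ : SimpleGraph (Fin 3))) := by
  classical
  rw [SimpleGraph.matchingPolynomial_eq_matchingPolyIn_univ] at h
  exact hG.nonempty_iso_starGraph_or_top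
    (SimpleGraph.three_le_card_of_card_roots_toFinset_eq_three h)
    (hG.forall_adj_meet_of_card_roots_toFinset_eq_three h)
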